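/- arXiv:0907.4066 — 3 statements merged into one kernel-verified Lean document; each statement's English description precedes it below -/
import Mathlib

section
/- Let g : ℝ → ℝ be a concave C¹ function. For all real symmetric d×d matrices φ and ψ, the two-sided trace inequality (φ − ψ) : g'(ψ) ≥ tr(g(φ) − g(ψ)) ≥ (φ − ψ) : g'(φ) holds, where g(φ) and g'(φ) are defined spectrally and A:B denotes the Frobenius inner product. -/
open Matrix BigOperators

/-- Frobenius inner product of two square real matrices. -/
noncomputable def frobInner {n : ℕ} (A B : Matrix (Fin n) (Fin n) ℝ) : ℝ :=
  ∑ i, ∑ j, A i j * B i j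

/-- Spectral application of a scalar function: given a decomposition `φ = Oᵀ D O`,
`specApply g O D = Oᵀ g(D) O`. -/
noncomputable def specApply {n : ℕ} (g : ℝ → ℝ) (O : Matrix (Fin n) (Fin n) ℝ)
    (D : Fin n → ℝ) : Matrix (Fin n) (Fin n) ℝ :=
  Oᵀ * Matrix.diagonal (fun i => g (D i)) * O

/-- The regularized logarithm `G_δ`. -/
noncomputable def Gdelta (δ : ℝ) (s : ℝ) : ℝ :=
  if δ ≤ s then Real.log s else s / δ + Real.log δ - 1

/-- The derivative of the regularized logarithm, `G_δ'(s) = 1 / max{s, δ}`. -/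
noncomputable def Gdelta' (δ : ℝ) (s : ℝ) : ℝ := (max s δ)⁻¹

/-- The scalar cut-off `β_δ(s) = max{s, δ}`. -/
noncomputable def betaDelta (δ : ℝ) (s : ℝ) : ℝ := max s δ

lemma tangent_le (g g' : ℝ → ℝ) (hd : ∀ x, HasDerivAt g (g' x) x)
    (hc : ConcaveOn ℝ Set.univ g) (a b : ℝ) : g a - g b ≤ g' b * (a - b) := by
  have hcx : ConvexOn ℝ Set.univ (fun x => -g x) := hc.neg
  rcases lt_trichotomy a b with h | h | h
  · have h1 := hcx.slope_le_of_hasDerivAt (Set.mem_univ a) (Set.mem_univ b) h ((hd b).neg)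
    rw [slope_def_field] at h1
    have hb : 0 < b - a := by linarith
    rw [div_le_iff₀ hb] at h1
    nlinarith
  · simp [h]
  · have h1 := hcx.le_slope_of_hasDerivAt (Set.mem_univ b) (Set.mem_univ a) h ((hd b).neg)
    rw [slope_def_field] at h1
    have hb : 0 < a - b := by linarith
    rw [le_div_iff₀ hb] at h1
    nlinarith

lemma frob_trace {n : ℕ} (A B : Matrix (Fin n) (Fin n) ℝ) :
    frobInner A B = Matrix.trace (A * Bᵀ) := by
  simp [frobInner, Matrix.trace, Matrix.diag, Matrix.mul_apply]

lemma trace_spec {n : ℕ} (f : ℝ → ℝ) (O : Matrix (Fin n) (Fin n) ℝ) (D : Fin n → ℝ)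
    (h : Oᵀ * O = 1) : Matrix.trace (specApply f O D) = ∑ i, f (D i) := by
  rw [specApply, Matrix.trace_mul_cycle, mul_eq_one_comm.mp h, Matrix.one_mul,
    Matrix.trace_diagonal]

lemma frob_spec {n : ℕ} (f : ℝ → ℝ) (O1 O2 : Matrix (Fin n) (Fin n) ℝ)
    (D1 D2 : Fin n → ℝ) :
    frobInner (O1ᵀ * Matrix.diagonal D1 * O1) (specApply f O2 D2)
      = ∑ i, ∑ j, ((O1 * O2ᵀ) i j)^2 * (D1 i * f (D2 j)) := by
  set F := Matrix.diagonal (fun i => f (D2 i)) with hF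
  set N := O1 * O2ᵀ with hN
  rw [frob_trace, specApply]
  rw [show (O2ᵀ * F * O2)ᵀ = O2ᵀ * F * O2 by
    simp [hF, Matrix.transpose_mul, Matrix.mul_assoc]]
  rw [show O1ᵀ * Matrix.diagonal D1 * O1 * (O2ᵀ * F * O2)
      = O1ᵀ * (Matrix.diagonal D1 * O1 * (O2ᵀ * F * O2)) by simp [Matrix.mul_assoc]]
  rw [Matrix.trace_mul_comm]
  rw [show Matrix.diagonal D1 * O1 * (O2ᵀ * F * O2) * O1ᵀ
      = Matrix.diagonal D1 * (N * F * Nᵀ) by simp [hN, Matrix.transpose_mul, Matrix.mul_assoc]]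
  have h1 : Matrix.trace (Matrix.diagonal D1 * (N * F * Nᵀ)) = ∑ k, D1 k * (N * F * Nᵀ) k k := by
    simp [Matrix.trace, Matrix.diag, Matrix.diagonal_mul]
  rw [h1]
  refine Finset.sum_congr rfl fun k _ => ?_
  have h2 : (N * F * Nᵀ) k k = ∑ l, (N k l * f (D2 l)) * N k l := by
    simp only [Matrix.mul_apply, Matrix.transpose_apply]
    refine Finset.sum_congr rfl fun l _ => ?_
    congr 1
    simp [hF, Matrix.mul_diagonal, Matrix.diagonal_apply, Finset.sum_ite_eq]
  rw [h2, Finset.mul_sum]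
  refine Finset.sum_congr rfl fun l _ => ?_
  ring
theorem stmt6 {d : ℕ} (g g' : ℝ → ℝ)
    (hderiv : ∀ x : ℝ, HasDerivAt g (g' x) x)
    (hconc : ConcaveOn ℝ Set.univ g)
    (φ ψ Oφ Oψ : Matrix (Fin d) (Fin d) ℝ) (Dφ Dψ : Fin d → ℝ)
    (hφ : φ.IsSymm) (hψ : ψ.IsSymm)
    (hOφ : Oφᵀ * Oφ = 1) (hOψ : Oψᵀ * Oψ = 1)
    (hdecφ : φ = Oφᵀ * Matrix.diagonal Dφ * Oφ)
    (hdecψ : ψ = Oψᵀ * Matrix.diagonal Dψ * Oψ) :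
    Matrix.trace (specApply g Oφ Dφ - specApply g Oψ Dψ) ≤
        frobInner (φ - ψ) (specApply g' Oψ Dψ) ∧
      frobInner (φ - ψ) (specApply g' Oφ Dφ) ≤
        Matrix.trace (specApply g Oφ Dφ - specApply g Oψ Dψ) := by
  have htang : ∀ a b : ℝ, g a - g b ≤ g' b * (a - b) :=
    tangent_le g g' hderiv hconc
  have htang' : ∀ a b : ℝ, g' a * (a - b) ≤ g a - g b := by
    intro a b; have h := htang b a; nlinarith
  have hOφ' : Oφ * Oφᵀ = 1 := mul_eq_one_comm.mp hOφ
  have hOψ' : Oψ * Oψᵀ = 1 := mul_eq_one_comm.mp hOψ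
  set M : Matrix (Fin d) (Fin d) ℝ := Oφ * Oψᵀ with hM
  have hMMt : M * Mᵀ = 1 := by
    have h1 : M * Mᵀ = Oφ * (Oψᵀ * Oψ) * Oφᵀ := by
      simp [hM, Matrix.transpose_mul, Matrix.mul_assoc]
    rw [h1, hOψ, Matrix.mul_one, hOφ']
  have hMtM : Mᵀ * M = 1 := mul_eq_one_comm.mp hMMt
  have hrow : ∀ i, ∑ j, (M i j) ^ 2 = 1 := by
    intro i
    have h := congrArg (fun A => A i i) hMMt
    simpa [Matrix.mul_apply, Matrix.transpose_apply, Matrix.one_apply, pow_two] using h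
  have hcol : ∀ j, ∑ i, (M i j) ^ 2 = 1 := by
    intro j
    have h := congrArg (fun A => A j j) hMtM
    simpa [Matrix.mul_apply, Matrix.transpose_apply, Matrix.one_apply, pow_two] using h
  -- trace as a double sum
  have hT : Matrix.trace (specApply g Oφ Dφ - specApply g Oψ Dψ)
      = ∑ i, ∑ j, (M i j) ^ 2 * (g (Dφ i) - g (Dψ j)) := by
    rw [Matrix.trace_sub, trace_spec g Oφ Dφ hOφ, trace_spec g Oψ Dψ hOψ]
    have e1 : ∑ i, g (Dφ i) = ∑ i, ∑ j, (M i j) ^ 2 * g (Dφ i) := by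
      refine Finset.sum_congr rfl fun i _ => ?_
      rw [← Finset.sum_mul, hrow i, one_mul]
    have e2 : ∑ j, g (Dψ j) = ∑ i, ∑ j, (M i j) ^ 2 * g (Dψ j) := by
      rw [Finset.sum_comm]
      refine Finset.sum_congr rfl fun j _ => ?_
      rw [← Finset.sum_mul, hcol j, one_mul]
    rw [e1, e2, ← Finset.sum_sub_distrib]
    refine Finset.sum_congr rfl fun i _ => ?_
    rw [← Finset.sum_sub_distrib]
    exact Finset.sum_congr rfl fun j _ => by ring
  have hfs : ∀ B : Matrix (Fin d) (Fin d) ℝ,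
      frobInner (φ - ψ) B = frobInner φ B - frobInner ψ B := by
    intro B
    simp [frobInner, Matrix.sub_apply, sub_mul, Finset.sum_sub_distrib]
  constructor
  · -- first inequality
    have hφB : frobInner φ (specApply g' Oψ Dψ)
        = ∑ i, ∑ j, (M i j) ^ 2 * (Dφ i * g' (Dψ j)) := by
      rw [hdecφ, frob_spec]
    have hψB : frobInner ψ (specApply g' Oψ Dψ)
        = ∑ i, ∑ j, (M i j) ^ 2 * (Dψ j * g' (Dψ j)) := by
      rw [hdecψ, frob_spec, hOψ']
      have h1 : ∑ i, ∑ j, ((1 : Matrix (Fin d) (Fin d) ℝ) i j) ^ 2 * (Dψ i * g' (Dψ j))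
          = ∑ j, Dψ j * g' (Dψ j) := by
        simp [Matrix.one_apply, ite_pow, ite_mul]
      rw [h1, Finset.sum_comm]
      refine Finset.sum_congr rfl fun j _ => ?_
      rw [← Finset.sum_mul, hcol j, one_mul]
    rw [hT, hfs, hφB, hψB, ← Finset.sum_sub_distrib]
    refine Finset.sum_le_sum fun i _ => ?_
    rw [← Finset.sum_sub_distrib]
    refine Finset.sum_le_sum fun j _ => ?_
    have h2 : (M i j) ^ 2 * (Dφ i * g' (Dψ j)) - (M i j) ^ 2 * (Dψ j * g' (Dψ j))
        = (M i j) ^ 2 * (g' (Dψ j) * (Dφ i - Dψ j)) := by ring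
    rw [h2]
    exact mul_le_mul_of_nonneg_left (htang (Dφ i) (Dψ j)) (sq_nonneg _)
  · -- second inequality
    have hφB : frobInner φ (specApply g' Oφ Dφ)
        = ∑ i, ∑ j, (M i j) ^ 2 * (Dφ i * g' (Dφ i)) := by
      rw [hdecφ, frob_spec, hOφ']
      have h1 : ∑ i, ∑ j, ((1 : Matrix (Fin d) (Fin d) ℝ) i j) ^ 2 * (Dφ i * g' (Dφ j))
          = ∑ i, Dφ i * g' (Dφ i) := by
        simp [Matrix.one_apply, ite_pow, ite_mul]
      rw [h1]
      refine Finset.sum_congr rfl fun i _ => ?_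
      rw [← Finset.sum_mul, hrow i, one_mul]
    have hψB : frobInner ψ (specApply g' Oφ Dφ)
        = ∑ i, ∑ j, (M i j) ^ 2 * (Dψ j * g' (Dφ i)) := by
      rw [hdecψ, frob_spec]
      have hMt : Oψ * Oφᵀ = Mᵀ := by simp [hM, Matrix.transpose_mul]
      rw [hMt, Finset.sum_comm]
      refine Finset.sum_congr rfl fun i _ => Finset.sum_congr rfl fun j _ => ?_
      rw [Matrix.transpose_apply]
    rw [hT, hfs, hφB, hψB, ← Finset.sum_sub_distrib]
    refine Finset.sum_le_sum fun i _ => ?_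
    rw [← Finset.sum_sub_distrib]
    refine Finset.sum_le_sum fun j _ => ?_
    have h2 : (M i j) ^ 2 * (Dφ i * g' (Dφ i)) - (M i j) ^ 2 * (Dψ j * g' (Dφ i))
        = (M i j) ^ 2 * (g' (Dφ i) * (Dφ i - Dψ j)) := by ring
    rw [h2]
    exact mul_le_mul_of_nonneg_left (htang' (Dφ i) (Dψ j)) (sq_nonneg _)
end

section
/- Let g : ℝ → ℝ be Lipschitz continuous with Lipschitz constant g_Lip. Then for all real symmetric d×d matrices φ and ψ, ‖g(φ) − g(ψ)‖ ≤ g_Lip ‖φ − ψ‖, where g is applied to symmetric matrices spectrally and ‖·‖ is the Frobenius norm. -/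
open Matrix BigOperators

lemma frobInner_eq_trace {n : ℕ} (A B : Matrix (Fin n) (Fin n) ℝ) :
    frobInner A B = (A * Bᵀ).trace := by
  simp [frobInner, Matrix.trace, Matrix.mul_apply, Matrix.diag]

lemma trace_diag_conj {n : ℕ} (a b : Fin n → ℝ) (U : Matrix (Fin n) (Fin n) ℝ) :
    (Matrix.diagonal a * U * Matrix.diagonal b * Uᵀ).trace
    = ∑ i, ∑ j, a i * U i j * (b j * U i j) := by
  simp only [Matrix.trace, Matrix.diag, Matrix.mul_apply, Matrix.diagonal_apply,
    Matrix.transpose_apply, ite_mul, mul_ite, zero_mul, mul_zero,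
    Finset.sum_ite_eq, Finset.sum_ite_eq', Finset.mem_univ, if_true,
    Finset.sum_mul, Finset.mul_sum]
  exact Finset.sum_congr rfl fun i _ => Finset.sum_congr rfl fun j _ => by ring

lemma trace_conj_pair {n : ℕ} (a b : Fin n → ℝ) (O₁ O₂ : Matrix (Fin n) (Fin n) ℝ) :
    ((O₁ᵀ * Matrix.diagonal a * O₁) * (O₂ᵀ * Matrix.diagonal b * O₂)).trace
    = ∑ i, ∑ j, a i * (O₁ * O₂ᵀ) i j * (b j * (O₁ * O₂ᵀ) i j) := by
  have h1 : (O₁ᵀ * Matrix.diagonal a * O₁) * (O₂ᵀ * Matrix.diagonal b * O₂)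
      = O₁ᵀ * (Matrix.diagonal a * (O₁ * (O₂ᵀ * (Matrix.diagonal b * O₂)))) := by
    simp only [Matrix.mul_assoc]
  rw [h1, Matrix.trace_mul_comm]
  have h2 : Matrix.diagonal a * (O₁ * (O₂ᵀ * (Matrix.diagonal b * O₂))) * O₁ᵀ
      = Matrix.diagonal a * (O₁ * O₂ᵀ) * Matrix.diagonal b * (O₁ * O₂ᵀ)ᵀ := by
    simp only [Matrix.transpose_mul, Matrix.transpose_transpose, Matrix.mul_assoc]
  rw [h2, trace_diag_conj]

lemma frob_key {n : ℕ} (a b : Fin n → ℝ) (O₁ O₂ : Matrix (Fin n) (Fin n) ℝ)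
    (h₁ : O₁ᵀ * O₁ = 1) (h₂ : O₂ᵀ * O₂ = 1) :
    frobInner (O₁ᵀ * Matrix.diagonal a * O₁ - O₂ᵀ * Matrix.diagonal b * O₂)
      (O₁ᵀ * Matrix.diagonal a * O₁ - O₂ᵀ * Matrix.diagonal b * O₂)
    = ∑ i, ∑ j, (O₁ * O₂ᵀ) i j ^ 2 * (a i - b j) ^ 2 := by
  set U : Matrix (Fin n) (Fin n) ℝ := O₁ * O₂ᵀ with hU
  set P : Matrix (Fin n) (Fin n) ℝ := O₁ᵀ * Matrix.diagonal a * O₁ with hP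
  set Q : Matrix (Fin n) (Fin n) ℝ := O₂ᵀ * Matrix.diagonal b * O₂ with hQ
  have h₁' : O₁ * O₁ᵀ = 1 := mul_eq_one_comm.mp h₁
  have h₂' : O₂ * O₂ᵀ = 1 := mul_eq_one_comm.mp h₂
  have hUUt : U * Uᵀ = 1 := by
    have : U * Uᵀ = O₁ * (O₂ᵀ * O₂) * O₁ᵀ := by
      simp only [hU, Matrix.transpose_mul, Matrix.transpose_transpose, Matrix.mul_assoc]
    rw [this, h₂, mul_one, h₁']
  have hUtU : Uᵀ * U = 1 := mul_eq_one_comm.mp hUUt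
  have hrow : ∀ i, ∑ j, U i j ^ 2 = 1 := by
    intro i
    have := congrFun (congrFun hUUt i) i
    simpa [Matrix.mul_apply, Matrix.one_apply, sq] using this
  have hcol : ∀ j, ∑ i, U i j ^ 2 = 1 := by
    intro j
    have := congrFun (congrFun hUtU j) j
    simpa [Matrix.mul_apply, Matrix.one_apply, sq] using this
  have hsym : (P - Q)ᵀ = P - Q := by
    simp [hP, hQ, Matrix.transpose_sub, Matrix.transpose_mul, Matrix.transpose_transpose,
      Matrix.diagonal_transpose, Matrix.mul_assoc]
  rw [frobInner_eq_trace, hsym, Matrix.sub_mul, Matrix.mul_sub, Matrix.mul_sub,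
    Matrix.trace_sub, Matrix.trace_sub, Matrix.trace_sub,
    Matrix.trace_mul_comm Q P]
  rw [hP, hQ, trace_conj_pair a a O₁ O₁, trace_conj_pair a b O₁ O₂, trace_conj_pair b b O₂ O₂]
  rw [h₁', h₂', ← hU]
  have hAA : ∑ i, ∑ j, a i * (1 : Matrix (Fin n) (Fin n) ℝ) i j * (a j * (1 : Matrix (Fin n) (Fin n) ℝ) i j) = ∑ i, a i ^ 2 := by
    simp [Matrix.one_apply, mul_ite, ite_mul, Finset.sum_ite_eq', sq]
  have hBB : ∑ i, ∑ j, b i * (1 : Matrix (Fin n) (Fin n) ℝ) i j * (b j * (1 : Matrix (Fin n) (Fin n) ℝ) i j) = ∑ i, b i ^ 2 := by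
    simp [Matrix.one_apply, mul_ite, ite_mul, Finset.sum_ite_eq', sq]
  rw [hAA, hBB]
  have hexp : ∑ i, ∑ j, U i j ^ 2 * (a i - b j) ^ 2
      = ∑ i, ∑ j, (U i j ^ 2 * a i ^ 2 + U i j ^ 2 * b j ^ 2
          - 2 * (a i * U i j * (b j * U i j))) :=
    Finset.sum_congr rfl fun i _ => Finset.sum_congr rfl fun j _ => by ring
  have hA : ∑ i, ∑ j, U i j ^ 2 * a i ^ 2 = ∑ i, a i ^ 2 := by
    refine Finset.sum_congr rfl fun i _ => ?_
    rw [← Finset.sum_mul, hrow i, one_mul]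
  have hB : ∑ i, ∑ j, U i j ^ 2 * b j ^ 2 = ∑ j, b j ^ 2 := by
    rw [Finset.sum_comm]
    refine Finset.sum_congr rfl fun j _ => ?_
    rw [← Finset.sum_mul, hcol j, one_mul]
  rw [hexp]
  simp only [Finset.sum_sub_distrib, Finset.sum_add_distrib, ← Finset.mul_sum]
  rw [hA, hB]
  ring

theorem stmt9 {d : ℕ} (g : ℝ → ℝ) (gLip : ℝ)
    (hlip : ∀ a b : ℝ, |g a - g b| ≤ gLip * |a - b|)
    (φ ψ Oφ Oψ : Matrix (Fin d) (Fin d) ℝ) (Dφ Dψ : Fin d → ℝ)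
    (hφ : φ.IsSymm) (hψ : ψ.IsSymm)
    (hOφ : Oφᵀ * Oφ = 1) (hOψ : Oψᵀ * Oψ = 1)
    (hdecφ : φ = Oφᵀ * Matrix.diagonal Dφ * Oφ)
    (hdecψ : ψ = Oψᵀ * Matrix.diagonal Dψ * Oψ) :
    Real.sqrt (frobInner (specApply g Oφ Dφ - specApply g Oψ Dψ)
        (specApply g Oφ Dφ - specApply g Oψ Dψ)) ≤
      gLip * Real.sqrt (frobInner (φ - ψ) (φ - ψ)) := by
  have hg0 : 0 ≤ gLip := by
    have h := hlip 0 1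
    have h2 : (0:ℝ) ≤ |g 0 - g 1| := abs_nonneg _
    simp at h
    linarith
  have h1 : frobInner (specApply g Oφ Dφ - specApply g Oψ Dψ)
        (specApply g Oφ Dφ - specApply g Oψ Dψ)
      = ∑ i, ∑ j, (Oφ * Oψᵀ) i j ^ 2 * (g (Dφ i) - g (Dψ j)) ^ 2 :=
    frob_key (fun i => g (Dφ i)) (fun i => g (Dψ i)) Oφ Oψ hOφ hOψ
  have h2 : frobInner (φ - ψ) (φ - ψ)
      = ∑ i, ∑ j, (Oφ * Oψᵀ) i j ^ 2 * (Dφ i - Dψ j) ^ 2 := by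
    rw [hdecφ, hdecψ]
    have := frob_key Dφ Dψ Oφ Oψ hOφ hOψ
    simpa using this
  rw [h1, h2]
  rw [show gLip * Real.sqrt (∑ i, ∑ j, (Oφ * Oψᵀ) i j ^ 2 * (Dφ i - Dψ j) ^ 2)
      = Real.sqrt (gLip ^ 2 * ∑ i, ∑ j, (Oφ * Oψᵀ) i j ^ 2 * (Dφ i - Dψ j) ^ 2) by
    rw [Real.sqrt_mul (sq_nonneg _), Real.sqrt_sq hg0]]
  apply Real.sqrt_le_sqrt
  rw [Finset.mul_sum]
  refine Finset.sum_le_sum fun i _ => ?_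
  rw [Finset.mul_sum]
  refine Finset.sum_le_sum fun j _ => ?_
  have hb : (g (Dφ i) - g (Dψ j)) ^ 2 ≤ gLip ^ 2 * (Dφ i - Dψ j) ^ 2 := by
    calc (g (Dφ i) - g (Dψ j)) ^ 2 = |g (Dφ i) - g (Dψ j)| ^ 2 := (sq_abs _).symm
      _ ≤ (gLip * |Dφ i - Dψ j|) ^ 2 := by
          exact pow_le_pow_left₀ (abs_nonneg _) (hlip _ _) 2
      _ = gLip ^ 2 * (Dφ i - Dψ j) ^ 2 := by rw [mul_pow, sq_abs]
  calc (Oφ * Oψᵀ) i j ^ 2 * (g (Dφ i) - g (Dψ j)) ^ 2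
      ≤ (Oφ * Oψᵀ) i j ^ 2 * (gLip ^ 2 * (Dφ i - Dψ j) ^ 2) :=
        mul_le_mul_of_nonneg_left hb (sq_nonneg _)
    _ = gLip ^ 2 * ((Oφ * Oψᵀ) i j ^ 2 * (Dφ i - Dψ j) ^ 2) := by ring
end

section
/- Let {η_i}_{i=0}^d be affine barycentric coordinates on a non-obtuse simplex, so that ∇η_i · ∇η_j ≤ 0 for all i ≠ j, and let g : ℝ → ℝ be monotonically increasing and Lipschitz with constant g_Lip. Then for any a_0, …, a_d ∈ ℝ, g_Lip · ∇(Σ_i g(a_i) η_i) · ∇(Σ_j a_j η_j) ≥ ‖∇(Σ_i g(a_i) η_i)‖². -/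
open Matrix BigOperators Finset

theorem stmt13 {d : ℕ} (η : Fin (d + 1) → (Fin d → ℝ) → ℝ)
    (gr : Fin (d + 1) → (Fin d → ℝ)) (c : Fin (d + 1) → ℝ)
    (haff : ∀ i x, η i x = gr i ⬝ᵥ x + c i)
    (hsum : ∀ x, ∑ i, η i x = 1)
    (hnonobtuse : ∀ i j, i ≠ j → gr i ⬝ᵥ gr j ≤ 0)
    (f : ℝ → ℝ) (fLip : ℝ) (hmono : Monotone f)
    (hlip : ∀ s t : ℝ, |f s - f t| ≤ fLip * |s - t|)
    (a : Fin (d + 1) → ℝ) :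
    (∑ i, f (a i) • gr i) ⬝ᵥ (∑ i, f (a i) • gr i) ≤
      fLip * ((∑ i, f (a i) • gr i) ⬝ᵥ (∑ j, a j • gr j)) := by
  set G : Fin (d + 1) → Fin (d + 1) → ℝ := fun i j => gr i ⬝ᵥ gr j with hG
  -- sum of gradients is zero
  have key : ∀ x, ∑ i, gr i ⬝ᵥ x = 0 := by
    intro x
    have h1 := hsum x
    have h0 := hsum (0 : Fin d → ℝ)
    simp only [haff] at h1 h0
    rw [Finset.sum_add_distrib] at h1 h0
    simp only [dotProduct_zero, Finset.sum_const_zero, zero_add] at h0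
    linarith
  have hz : ∀ k, ∑ i, gr i k = 0 := by
    intro k
    have := key (Pi.single k 1)
    simpa [dotProduct_single] using this
  have hrow : ∀ i, ∑ j, G i j = 0 := by
    intro i
    simp only [hG, dotProduct]
    rw [Finset.sum_comm]
    refine Finset.sum_eq_zero fun k _ => ?_
    rw [← Finset.mul_sum, hz k, mul_zero]
  have hcol : ∀ j, ∑ i, G i j = 0 := by
    intro j
    simp only [hG, dotProduct]
    rw [Finset.sum_comm]
    refine Finset.sum_eq_zero fun k _ => ?_
    rw [← Finset.sum_mul, hz k, zero_mul]
  -- dot product of linear combinations as double sum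
  have expand : ∀ b e : Fin (d + 1) → ℝ,
      (∑ i, b i • gr i) ⬝ᵥ (∑ j, e j • gr j) = ∑ i, ∑ j, b i * e j * G i j := by
    intro b e
    calc (∑ i, b i • gr i) ⬝ᵥ (∑ j, e j • gr j)
        = ∑ k, ∑ i, ∑ j, (b i * gr i k) * (e j * gr j k) := by
          simp only [dotProduct, Finset.sum_apply, Pi.smul_apply, smul_eq_mul,
            Finset.sum_mul, Finset.mul_sum]
          exact Finset.sum_congr rfl fun k _ => Finset.sum_comm
      _ = ∑ i, ∑ k, ∑ j, (b i * gr i k) * (e j * gr j k) := Finset.sum_comm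
      _ = ∑ i, ∑ j, ∑ k, (b i * gr i k) * (e j * gr j k) :=
          Finset.sum_congr rfl fun i _ => Finset.sum_comm
      _ = ∑ i, ∑ j, b i * e j * G i j := by
          refine Finset.sum_congr rfl fun i _ => Finset.sum_congr rfl fun j _ => ?_
          simp only [hG, dotProduct, Finset.mul_sum]
          exact Finset.sum_congr rfl fun k _ => by ring
  -- the key identity
  have iden : ∀ b e : Fin (d + 1) → ℝ,
      ∑ i, ∑ j, (b i - b j) * (e i - e j) * G i j
        = -2 * ∑ i, ∑ j, b i * e j * G i j := by
    intro b e
    have h1 : ∑ i, ∑ j, b i * e i * G i j = 0 := by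
      refine Finset.sum_eq_zero fun i _ => ?_
      rw [← Finset.mul_sum, hrow, mul_zero]
    have h2 : ∑ i, ∑ j, b j * e j * G i j = 0 := by
      rw [Finset.sum_comm]
      refine Finset.sum_eq_zero fun j _ => ?_
      rw [← Finset.mul_sum, hcol, mul_zero]
    have hsym : ∑ i, ∑ j, b j * e i * G i j = ∑ i, ∑ j, b i * e j * G i j := by
      rw [Finset.sum_comm]
      refine Finset.sum_congr rfl fun i _ => Finset.sum_congr rfl fun j _ => ?_
      have : G j i = G i j := by simp [hG, dotProduct_comm]
      rw [this]
    have hexp : ∑ i, ∑ j, (b i - b j) * (e i - e j) * G i j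
        = (∑ i, ∑ j, b i * e i * G i j) - (∑ i, ∑ j, b i * e j * G i j)
          - (∑ i, ∑ j, b j * e i * G i j) + (∑ i, ∑ j, b j * e j * G i j) := by
      simp only [← Finset.sum_sub_distrib, ← Finset.sum_add_distrib]
      refine Finset.sum_congr rfl fun i _ => Finset.sum_congr rfl fun j _ => ?_
      ring
    rw [hexp, h1, h2, hsym]
    ring
  -- pointwise inequality
  have pt : ∀ s t : ℝ, (f s - f t) * (f s - f t) ≤ fLip * ((f s - f t) * (s - t)) := by
    intro s t
    rcases le_total t s with h | h
    · have h1 := hmono h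
      have h2 := hlip s t
      rw [abs_of_nonneg (by linarith), abs_of_nonneg (by linarith)] at h2
      nlinarith
    · have h1 := hmono h
      have h2 := hlip t s
      rw [abs_of_nonneg (by linarith), abs_of_nonneg (by linarith)] at h2
      nlinarith
  -- termwise comparison
  have hT : fLip * (∑ i, ∑ j, (f (a i) - f (a j)) * (a i - a j) * G i j)
      ≤ ∑ i, ∑ j, (f (a i) - f (a j)) * (f (a i) - f (a j)) * G i j := by
    rw [Finset.mul_sum]
    refine Finset.sum_le_sum fun i _ => ?_
    rw [Finset.mul_sum]
    refine Finset.sum_le_sum fun j _ => ?_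
    rcases eq_or_ne i j with rfl | hij
    · simp
    · have hGn : G i j ≤ 0 := hnonobtuse i j hij
      have hpt := pt (a i) (a j)
      nlinarith [mul_le_mul_of_nonpos_right hpt hGn]
  have e1 := expand (fun i => f (a i)) (fun i => f (a i))
  have e2 := expand (fun i => f (a i)) a
  have i1 := iden (fun i => f (a i)) (fun i => f (a i))
  have i2 := iden (fun i => f (a i)) a
  rw [e1, e2]
  rw [i1, i2] at hT
  set X := ∑ i, ∑ j, f (a i) * f (a j) * G i j with hX
  set Y := ∑ i, ∑ j, f (a i) * a j * G i j with hY
  have hring : fLip * (-2 * Y) = -2 * (fLip * Y) := by ring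
  rw [hring] at hT
  linarith
end
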